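/- arXiv:1311.7267 — 5 statements merged into one kernel-verified Lean document; each statement's English description precedes it below -/
import Mathlib

section
/- Let L = c(n₁) × ⋯ × c(n_t) be a finite product of chain lattices, and let β be a maximal join-irreducible of L, say β has the top element of the first chain in coordinate 1 and bottom elsewhere. Let B_β = {γ ∈ L : γ ≥ β}. For any α ∈ L with α ∉ B_β, and for every b₁ ∈ B_β other than b := α ∨ β, there exists a diamond D = {u, v, u∨v, u∧v} in L containing both α and b₁. Consequently |E_α \ E_α(L_β)| ≥ |B_β| − 1. -/
/-- `a` and `b` lie in a common diamond of the lattice, the whole diamond being contained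
in the subset `S`. -/
def InDiamond {L : Type*} [Lattice L] (a b : L) (S : Set L) : Prop :=
  ∃ x y : L, ¬ x ≤ y ∧ ¬ y ≤ x ∧ ({x, y, x ⊔ y, x ⊓ y} : Set L) ⊆ S ∧
    a ∈ ({x, y, x ⊔ y, x ⊓ y} : Set L) ∧ b ∈ ({x, y, x ⊔ y, x ⊓ y} : Set L)

/-! When `α ≤ b`, lowering the `i₀`-coordinate of `b` to that of `α` gives an element `v` with
`(α ⊔ β) ⊓ v = α` and `(α ⊔ β) ⊔ v = b`, because `β` is `⊤` at `i₀` and `⊥` elsewhere; the two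
are incomparable since `α i₀ ≠ ⊤` and `b ≠ α ⊔ β`. When `α ≰ b`, `α` and `b` are themselves
incomparable. The count follows because a diamond through some `b ≥ β` is never inside
`{δ | ¬ β ≤ δ}`. -/

theorem not_inDiamond_of_notMem {L : Type*} [Lattice L] {a b : L} {S : Set L} (hb : b ∉ S) :
    ¬ InDiamond a b S := by
  rintro ⟨x, y, -, -, hS, -, hbD⟩
  exact hb (hS hbD)

namespace Pi

variable {ι : Type*} [DecidableEq ι] {π : ι → Type*} [∀ i, Lattice (π i)]
  [∀ i, BoundedOrder (π i)] {i₀ : ι} {α β b : ∀ i, π i}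

theorem inDiamond_of_le_of_ne (hβ₀ : β i₀ = ⊤) (hβ : ∀ i ≠ i₀, β i = ⊥) (hα : ¬ β ≤ α)
    (hb : β ≤ b) (hne : b ≠ α ⊔ β) : InDiamond α b Set.univ := by
  by_cases hab : α ≤ b
  swap
  · exact ⟨α, b, hab, fun hba => hα (hb.trans hba), Set.subset_univ _, by simp, by simp⟩
  have hb₀ : b i₀ = ⊤ := top_unique (hβ₀ ▸ hb i₀)
  have hα₀ : ¬ ⊤ ≤ α i₀ := by
    refine fun h => hα fun i => ?_
    rcases eq_or_ne i i₀ with rfl | hi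
    · exact hβ₀ ▸ h
    · exact hβ i hi ▸ bot_le
  set v := Function.update b i₀ (α i₀)
  have hinf : (α ⊔ β) ⊓ v = α := by
    funext i
    rcases eq_or_ne i i₀ with rfl | hi
    · simp [v, hβ₀]
    · simp [v, hi, hβ i hi, hab i]
  have hsup : (α ⊔ β) ⊔ v = b := by
    funext i
    rcases eq_or_ne i i₀ with rfl | hi
    · simp [v, hβ₀, hb₀]
    · simp [v, hi, hβ i hi, hab i]
  refine ⟨α ⊔ β, v, fun h => hα₀ ?_, fun h => hne ?_, Set.subset_univ _,
    by simp [hinf], by simp [hsup]⟩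
  · simpa [v, hβ₀] using h i₀
  · funext i
    rcases eq_or_ne i i₀ with rfl | hi
    · simp [hβ₀, hb₀]
    · exact le_antisymm (by simpa [v, hi] using h i) (sup_le (hab i) (hb i))

end Pi

theorem ncard_Ici_sub_one_le_ncard_inDiamond {L : Type*} [Lattice L] [Finite L] {α β : L}
    (h : ∀ b, β ≤ b → b ≠ α ⊔ β → InDiamond α b Set.univ) :
    (Set.Ici β).ncard - 1 ≤
      {γ | InDiamond α γ Set.univ ∧ ¬ InDiamond α γ {δ | ¬ β ≤ δ}}.ncard := by
  have hsub : Set.Ici β \ {α ⊔ β} ⊆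
      {γ | InDiamond α γ Set.univ ∧ ¬ InDiamond α γ {δ | ¬ β ≤ δ}} :=
    fun γ ⟨hγ, hne⟩ => ⟨h γ hγ hne, not_inDiamond_of_notMem (not_not_intro hγ)⟩
  calc (Set.Ici β).ncard - 1 = (Set.Ici β \ {α ⊔ β}).ncard :=
        (Set.ncard_sdiff_singleton_of_mem le_sup_right).symm
    _ ≤ _ := Set.ncard_le_ncard hsub

theorem stmt9_general {t : ℕ} (n : Fin (t + 1) → ℕ)
    (β : ∀ i, Fin (n i + 1))
    (hβdef : β = fun i => if i = 0 then Fin.last (n i) else 0)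
    (α : ∀ i, Fin (n i + 1)) (hα : ¬ β ≤ α) :
    (∀ b₁ : ∀ i, Fin (n i + 1), β ≤ b₁ → b₁ ≠ α ⊔ β →
      ∃ u v : ∀ i, Fin (n i + 1), ¬ u ≤ v ∧ ¬ v ≤ u ∧
        α ∈ ({u, v, u ⊔ v, u ⊓ v} : Set (∀ i, Fin (n i + 1))) ∧
        b₁ ∈ ({u, v, u ⊔ v, u ⊓ v} : Set (∀ i, Fin (n i + 1)))) ∧
    {γ : ∀ i, Fin (n i + 1) | InDiamond α γ Set.univ ∧
        ¬ InDiamond α γ {δ : ∀ i, Fin (n i + 1) | ¬ β ≤ δ}}.ncard ≥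
      {γ : ∀ i, Fin (n i + 1) | β ≤ γ}.ncard - 1 := by
  have hdiamond : ∀ b, β ≤ b → b ≠ α ⊔ β → InDiamond α b Set.univ :=
    fun b => Pi.inDiamond_of_le_of_ne (i₀ := 0) (by simp [hβdef, Fin.top_eq_last])
      (fun i hi => by simp [hβdef, hi, bot_eq_zero]) hα
  refine ⟨fun b hb hne => ?_, ncard_Ici_sub_one_le_ncard_inDiamond hdiamond⟩
  obtain ⟨u, v, huv, hvu, -, hαD, hbD⟩ := hdiamond b hb hne
  exact ⟨u, v, huv, hvu, hαD, hbD⟩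

/-- In a product of chains `L = c(n₀+1) × ⋯`, with `β` the maximal join-irreducible having
the top of the first chain in coordinate `0` and bottom elsewhere, and `α ∉ B_β = {γ : γ ≥ β}`:
for every `b₁ ∈ B_β` with `b₁ ≠ α ⊔ β` there is a diamond containing both `α` and `b₁`;
consequently `|E_α \ E_α(L_β)| ≥ |B_β| − 1`. -/
theorem stmt9 {t : ℕ} (n : Fin (t + 1) → ℕ) (hn : 1 ≤ n 0)
    (β : ∀ i, Fin (n i + 1))
    (hβdef : β = fun i => if i = 0 then Fin.last (n i) else 0)
    (hβirr : SupIrred β ∧ ∀ γ : ∀ i, Fin (n i + 1), SupIrred γ → ¬ β < γ)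
    (α : ∀ i, Fin (n i + 1)) (hα : ¬ β ≤ α) :
    (∀ b₁ : ∀ i, Fin (n i + 1), β ≤ b₁ → b₁ ≠ α ⊔ β →
      ∃ u v : ∀ i, Fin (n i + 1), ¬ u ≤ v ∧ ¬ v ≤ u ∧
        α ∈ ({u, v, u ⊔ v, u ⊓ v} : Set (∀ i, Fin (n i + 1))) ∧
        b₁ ∈ ({u, v, u ⊔ v, u ⊓ v} : Set (∀ i, Fin (n i + 1)))) ∧
    {γ : ∀ i, Fin (n i + 1) | InDiamond α γ Set.univ ∧
        ¬ InDiamond α γ {δ : ∀ i, Fin (n i + 1) | ¬ β ≤ δ}}.ncard ≥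
      {γ : ∀ i, Fin (n i + 1) | β ≤ γ}.ncard - 1 :=
  stmt9_general n β hβdef α hα
end

section
/- Let L be a finite product of chain lattices, α ∈ L not the maximum of L, and β a maximal join-irreducible of L with β ≰ α. Then the count |E_α| − |E_α(L_β)| of pairs (α, γ) lying in a common diamond whose diamond is not entirely contained in L_β = {γ : γ ≱ β} is at least |L| − |L_β| − 1, i.e., at least |{γ ∈ L : γ ≥ β}| − 1. -/
open Function

section Diamond

variable {L : Type*} [Lattice L] {a b : L} {S : Set L}

theorem InDiamond.right_mem (h : InDiamond a b S) : b ∈ S := by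
  obtain ⟨x, y, -, -, hS, -, hb⟩ := h
  exact hS hb

theorem inDiamond_univ_of_not_le_of_not_le (hab : ¬ a ≤ b) (hba : ¬ b ≤ a) :
    InDiamond a b Set.univ :=
  ⟨a, b, hab, hba, Set.subset_univ _, by simp, by simp⟩

theorem inDiamond_univ_of_inf_eq_of_sup_eq {x y : L} (hxy : ¬ x ≤ y) (hyx : ¬ y ≤ x)
    (ha : x ⊓ y = a) (hb : x ⊔ y = b) : InDiamond a b Set.univ :=
  ⟨x, y, hxy, hyx, Set.subset_univ _, by simp [← ha], by simp [← hb]⟩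

end Diamond

section Pi

variable {ι : Type*} [DecidableEq ι] {π : ι → Type*}

theorem Pi.inDiamond_univ_of_lt_of_lt [∀ i, Lattice (π i)] {a b : ∀ i, π i} (hab : a ≤ b)
    {i j : ι} (hji : j ≠ i) (hi : a i < b i) (hj : a j < b j) : InDiamond a b Set.univ := by
  refine inDiamond_univ_of_inf_eq_of_sup_eq (x := update a i (b i)) (y := update b i (a i))
    ?_ ?_ ?_ ?_
  · exact fun h => hi.not_ge (by simpa using h i)
  · exact fun h => hj.not_ge (by simpa [hji] using h j)
  all_goals
    ext k
    rcases eq_or_ne k i with rfl | hk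
    · simpa using hi.le
    · simpa [hk] using hab k

theorem Pi.exists_ne_lt_of_le_of_ne_update [∀ i, PartialOrder (π i)] {a b : ∀ i, π i}
    (hab : a ≤ b) {i : ι} (hb : b ≠ update a i (b i)) : ∃ j ≠ i, a j < b j := by
  by_contra! h
  exact hb (update_eq_iff.2 ⟨rfl, fun j hj => (hab j).lt_or_eq.resolve_left (h j hj)⟩).symm

theorem Pi.update_bot_top_le_iff [∀ i, PartialOrder (π i)] [∀ i, BoundedOrder (π i)]
    {f : ∀ i, π i} {i : ι} : update ⊥ i ⊤ ≤ f ↔ f i = ⊤ := by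
  simp [update_le_iff]

variable [∀ i, LinearOrder (π i)]

theorem Pi.supPrime_update_bot [∀ i, OrderBot (π i)] {i : ι} {a : π i} (ha : a ≠ ⊥) :
    SupPrime (update (⊥ : ∀ i, π i) i a) := by
  refine ⟨fun h => ha ?_, fun b c h => ?_⟩
  · simpa using congrFun h.eq_bot i
  · have : a ≤ b i ∨ a ≤ c i := le_sup_iff.1 (by simpa using h i)
    simpa [update_le_iff] using this

theorem Pi.eq_update_bot_of_supIrred [∀ i, OrderBot (π i)] {f : ∀ i, π i} (hf : SupIrred f) :
    ∃ i, f = update ⊥ i (f i) := by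
  obtain ⟨i, hi⟩ : ∃ i, f i ≠ ⊥ := by
    by_contra! h
    exact hf.ne_bot (funext h)
  refine ⟨i, le_antisymm ?_ (by simp [update_le_iff])⟩
  have hsplit : f ≤ update f i ⊥ ⊔ update ⊥ i (f i) := fun j => by
    rcases eq_or_ne j i with rfl | hj <;> simp [*]
  exact (hf.supPrime.2 hsplit).resolve_left fun h => hi (by simpa using h i)

theorem Pi.exists_eq_update_bot_top_of_maximal [∀ i, BoundedOrder (π i)] {f : ∀ i, π i}
    (hf : SupIrred f) (hmax : ∀ g : ∀ i, π i, SupIrred g → ¬ f < g) :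
    ∃ i, f = update ⊥ i ⊤ := by
  obtain ⟨i, hfi⟩ := eq_update_bot_of_supIrred hf
  have hne : f i ≠ ⊥ := fun h => hf.ne_bot (by rw [hfi, h]; simp)
  have hle : f ≤ update ⊥ i ⊤ := hfi ▸ update_le_update_iff'.2 le_top
  exact ⟨i, hle.lt_or_eq.resolve_left <|
    hmax _ (supPrime_update_bot (ne_bot_of_le_ne_bot hne le_top)).supIrred⟩

end Pi

theorem stmt11_general {t : ℕ} (n : Fin t → ℕ) (α β : ∀ i, Fin (n i + 1))
    (hβ : SupIrred β ∧ ∀ γ : ∀ i, Fin (n i + 1), SupIrred γ → ¬ β < γ)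
    (hβα : ¬ β ≤ α) :
    {γ : ∀ i, Fin (n i + 1) | InDiamond α γ Set.univ ∧
        ¬ InDiamond α γ {δ : ∀ i, Fin (n i + 1) | ¬ β ≤ δ}}.ncard ≥
      {γ : ∀ i, Fin (n i + 1) | β ≤ γ}.ncard - 1 := by
  obtain ⟨i, rfl⟩ := Pi.exists_eq_update_bot_top_of_maximal hβ.1 hβ.2
  have hαi : α i < ⊤ := lt_top_iff_ne_top.2 (mt Pi.update_bot_top_le_iff.2 hβα)
  have hsub : {γ | update ⊥ i ⊤ ≤ γ} \ {update α i ⊤} ⊆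
      {γ | InDiamond α γ Set.univ ∧ ¬ InDiamond α γ {δ | ¬ update ⊥ i ⊤ ≤ δ}} := by
    rintro γ ⟨hβγ, hγ⟩
    refine ⟨?_, fun h => h.right_mem hβγ⟩
    by_cases hαγ : α ≤ γ
    · have hγi := Pi.update_bot_top_le_iff.1 hβγ
      obtain ⟨j, hji, hj⟩ := Pi.exists_ne_lt_of_le_of_ne_update hαγ (i := i) (by rwa [hγi])
      exact Pi.inDiamond_univ_of_lt_of_lt hαγ hji (hγi ▸ hαi) hj
    · exact inDiamond_univ_of_not_le_of_not_le hαγ fun h => hβα (hβγ.trans h)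
  rw [← Set.ncard_sdiff_singleton_of_mem (a := update α i ⊤) (by simp [Pi.update_bot_top_le_iff])]
  exact Set.ncard_le_ncard hsub

/-- In a finite product of chain lattices, for `α` not the maximum and `β` a maximal
join-irreducible with `β ≰ α`, the number of `γ` sharing a diamond with `α` where no such
shared diamond lies entirely within `L_β = {δ : δ ≱ β}` is at least `|{γ : γ ≥ β}| − 1
= |L| − |L_β| − 1`. -/
theorem stmt11 {t : ℕ} (n : Fin t → ℕ) (α β : ∀ i, Fin (n i + 1))
    (hα : α ≠ ⊤)
    (hβ : SupIrred β ∧ ∀ γ : ∀ i, Fin (n i + 1), SupIrred γ → ¬ β < γ)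
    (hβα : ¬ β ≤ α) :
    {γ : ∀ i, Fin (n i + 1) | InDiamond α γ Set.univ ∧
        ¬ InDiamond α γ {δ : ∀ i, Fin (n i + 1) | ¬ β ≤ δ}}.ncard ≥
      {γ : ∀ i, Fin (n i + 1) | β ≤ γ}.ncard - 1 :=
  stmt11_general n α β hβ hβα
end

section
/- Let L be a finite distributive lattice and β a maximal join-irreducible of L. For any α ∈ L with β ≰ α, and any diamond D = {x, y, x∨y, x∧y} of L containing α and with at least one element of D in B_β = {γ : γ ≥ β}, exactly two elements of D lie in B_β, and these two elements are comparable in L. -/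
/-! Since `β` is join-irreducible in a distributive lattice it is join-prime, and since `β ≰ α`
it is not below the bottom `x ⊓ y` of the diamond. Hence an element of the diamond above `β`
forces `β ≤ x` or `β ≤ y`, but not both; if `β ≤ x`, the elements above `β` are exactly the
chain `x < x ⊔ y`. -/

section Diamond

variable {L : Type*} [Lattice L]

def diamond (x y : L) : Set L := {x, y, x ⊔ y, x ⊓ y}

lemma diamond_comm (x y : L) : diamond x y = diamond y x := by
  rw [diamond, diamond, Set.insert_comm, sup_comm, inf_comm]

lemma inf_le_of_mem_diamond {x y d : L} (hd : d ∈ diamond x y) : x ⊓ y ≤ d := by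
  rcases hd with rfl | rfl | rfl | rfl
  · exact inf_le_left
  · exact inf_le_right
  · exact inf_le_left.trans le_sup_left
  · exact le_rfl

lemma le_or_le_of_le_mem_diamond {β x y d : L} (hβ : SupPrime β) (hm : ¬ β ≤ x ⊓ y)
    (hd : d ∈ diamond x y) (hβd : β ≤ d) : β ≤ x ∨ β ≤ y := by
  rcases hd with rfl | rfl | rfl | rfl
  · exact .inl hβd
  · exact .inr hβd
  · exact hβ.2 hβd
  · exact absurd hβd hm

lemma setOf_mem_diamond_le_eq {β x y : L} (hm : ¬ β ≤ x ⊓ y) (hx : β ≤ x) :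
    {d ∈ diamond x y | β ≤ d} = {x, x ⊔ y} := by
  have hy : ¬ β ≤ y := fun hy => hm (le_inf hx hy)
  ext d
  simp only [diamond, Set.mem_insert_iff, Set.mem_singleton_iff]
  constructor
  · rintro ⟨rfl | rfl | rfl | rfl, hβd⟩
    · exact .inl rfl
    · exact absurd hβd hy
    · exact .inr rfl
    · exact absurd hβd hm
  · rintro (rfl | rfl)
    · exact ⟨.inl rfl, hx⟩
    · exact ⟨.inr (.inr (.inl rfl)), hx.trans le_sup_left⟩

lemma ncard_setOf_mem_diamond_le_eq_two_and_le_total {β x y : L} (hyx : ¬ y ≤ x)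
    (hm : ¬ β ≤ x ⊓ y) (hx : β ≤ x) :
    {d ∈ diamond x y | β ≤ d}.ncard = 2 ∧
      ∀ d₁ ∈ diamond x y, ∀ d₂ ∈ diamond x y, β ≤ d₁ → β ≤ d₂ → d₁ ≤ d₂ ∨ d₂ ≤ d₁ := by
  have hset := setOf_mem_diamond_le_eq hm hx
  refine ⟨?_, fun d₁ hd₁ d₂ hd₂ h₁ h₂ => ?_⟩
  · rw [hset, Set.ncard_pair]
    exact fun h => hyx (le_sup_right.trans h.ge)
  · have hchain : IsChain (· ≤ ·) {d ∈ diamond x y | β ≤ d} := hset ▸ .pair le_sup_left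
    exact hchain.total ⟨hd₁, h₁⟩ ⟨hd₂, h₂⟩

end Diamond

theorem stmt13_general {L : Type*} [DistribLattice L] (β : L)
    (hβ : SupIrred β ∧ ∀ γ : L, SupIrred γ → ¬ β < γ)
    (α x y : L) (hβα : ¬ β ≤ α) (hxy : ¬ x ≤ y ∧ ¬ y ≤ x)
    (hα : α ∈ ({x, y, x ⊔ y, x ⊓ y} : Set L))
    (hB : ∃ d ∈ ({x, y, x ⊔ y, x ⊓ y} : Set L), β ≤ d) :
    {d ∈ ({x, y, x ⊔ y, x ⊓ y} : Set L) | β ≤ d}.ncard = 2 ∧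
    ∀ d₁ ∈ ({x, y, x ⊔ y, x ⊓ y} : Set L), ∀ d₂ ∈ ({x, y, x ⊔ y, x ⊓ y} : Set L),
      β ≤ d₁ → β ≤ d₂ → d₁ ≤ d₂ ∨ d₂ ≤ d₁ := by
  change _ ∈ diamond x y at hα
  change ∃ d ∈ diamond x y, _ at hB
  change {d ∈ diamond x y | _}.ncard = 2 ∧ ∀ d₁ ∈ diamond x y, ∀ d₂ ∈ diamond x y, _
  have hm : ¬ β ≤ x ⊓ y := fun h => hβα (h.trans (inf_le_of_mem_diamond hα))
  obtain ⟨d, hd, hβd⟩ := hB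
  rcases le_or_le_of_le_mem_diamond hβ.1.supPrime hm hd hβd with hx | hy
  · exact ncard_setOf_mem_diamond_le_eq_two_and_le_total hxy.2 hm hx
  · rw [diamond_comm]
    exact ncard_setOf_mem_diamond_le_eq_two_and_le_total hxy.1 (inf_comm x y ▸ hm) hy

/-- In a finite distributive lattice with `β` a maximal join-irreducible, for `α` with
`β ≰ α` and a diamond `{x, y, x⊔y, x⊓y}` containing `α` with at least one element in
`B_β = {γ : γ ≥ β}`, exactly two elements of the diamond lie in `B_β`, and these two
elements are comparable. -/
theorem stmt13 {L : Type*} [DistribLattice L] [Fintype L] (β : L)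
    (hβ : SupIrred β ∧ ∀ γ : L, SupIrred γ → ¬ β < γ)
    (α x y : L) (hβα : ¬ β ≤ α) (hxy : ¬ x ≤ y ∧ ¬ y ≤ x)
    (hα : α ∈ ({x, y, x ⊔ y, x ⊓ y} : Set L))
    (hB : ∃ d ∈ ({x, y, x ⊔ y, x ⊓ y} : Set L), β ≤ d) :
    {d ∈ ({x, y, x ⊔ y, x ⊓ y} : Set L) | β ≤ d}.ncard = 2 ∧
    ∀ d₁ ∈ ({x, y, x ⊔ y, x ⊓ y} : Set L), ∀ d₂ ∈ ({x, y, x ⊔ y, x ⊓ y} : Set L),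
      β ≤ d₁ → β ≤ d₂ → d₁ ≤ d₂ ∨ d₂ ≤ d₁ :=
  stmt13_general β hβ α x y hβα hxy hα hB
end

section
/- Let L be a finite distributive lattice, β a maximal join-irreducible, and β₁ a join-irreducible covered by β in J(L) (assuming the join-irreducibles below β form a chain so β₁ is unique). Then the map φ(x) = x ∨ β is an order isomorphism from B_{β₁}(L_β) = {x ∈ L_β : x ≥ β₁} onto B_β = {γ ∈ L : γ ≥ β}, where L_β = {γ ∈ L : γ ≱ β}. -/
/-!
Every element of a finite distributive lattice is the join of the join-irreducibles below it,
and join-irreducibles are join-prime. Since `β` is a maximal join-irreducible, the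
join-irreducibles below `γ ≥ β` other than `β` join to some `x` with `β ≰ x` and `x ⊔ β = γ`;
this gives surjectivity. Conversely, if `x ⊔ β ≤ y ⊔ β` with `β ≰ x`, each join-irreducible
`p ≤ x` lies below `y` or strictly below `β`, and in the latter case the chain condition forces
`p ≤ β₁ ≤ y`; so the map reflects the order.
-/

section

variable {L : Type*}

theorem le_of_forall_supIrred_le [SemilatticeSup L] [OrderBot L] [WellFoundedLT L] {x y : L}
    (h : ∀ p, SupIrred p → p ≤ x → p ≤ y) : x ≤ y := by
  obtain ⟨s, rfl, hs⟩ := exists_supIrred_decomposition x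
  exact Finset.sup_le fun p hp => h p (hs hp) (Finset.le_sup (f := id) hp)

theorem supIrred_le_of_lt_of_chain [SemilatticeSup L] {β β₁ p : L}
    (hβ₁ : SupIrred β₁ ∧ β₁ < β ∧ ∀ δ : L, SupIrred δ → ¬ (β₁ < δ ∧ δ < β))
    (hchain : ∀ γ δ : L, SupIrred γ → SupIrred δ → γ < β → δ < β → γ ≤ δ ∨ δ ≤ γ)
    (hp : SupIrred p) (hpβ : p < β) : p ≤ β₁ := by
  obtain ⟨hβ₁irr, hβ₁β, hcov⟩ := hβ₁
  rcases hchain p β₁ hp hβ₁irr hpβ hβ₁β with hpβ₁ | hβ₁p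
  · exact hpβ₁
  · obtain rfl | hlt := hβ₁p.eq_or_lt
    · exact le_rfl
    · exact (hcov p hp ⟨hlt, hpβ⟩).elim

theorem le_of_sup_le_sup_of_not_le [DistribLattice L] [OrderBot L] [WellFoundedLT L]
    {β x y : L} (hx : ¬ β ≤ x) (hy : ∀ p, SupIrred p → p < β → p ≤ y)
    (h : x ⊔ β ≤ y ⊔ β) : x ≤ y :=
  le_of_forall_supIrred_le fun p hp hpx =>
    ((supPrime_iff_supIrred.2 hp).le_sup.1 ((le_sup_of_le_left hpx).trans h)).elim id
      fun hpβ => hy p hp (hpβ.lt_of_ne (by rintro rfl; exact hx hpx))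

theorem exists_sup_eq_of_maximal_supIrred [DistribLattice L] [Fintype L] [OrderBot L]
    {β γ : L} (hβ : SupIrred β) (hmax : ∀ p : L, SupIrred p → ¬ β < p) (hγ : β ≤ γ) :
    ∃ x, ¬ β ≤ x ∧ (∀ p, SupIrred p → p ≤ γ → p ≠ β → p ≤ x) ∧ x ⊔ β = γ := by
  classical
  set s := Finset.univ.filter fun p : L => SupIrred p ∧ p ≤ γ ∧ p ≠ β
  have hs : ∀ p, p ∈ s ↔ SupIrred p ∧ p ≤ γ ∧ p ≠ β := by simp [s]
  have hx : ∀ p, SupIrred p → p ≤ γ → p ≠ β → p ≤ s.sup id := fun p hp hpγ hpβ =>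
    Finset.le_sup (f := id) ((hs p).2 ⟨hp, hpγ, hpβ⟩)
  refine ⟨s.sup id, fun hβx => ?_, hx, le_antisymm ?_ ?_⟩
  · obtain ⟨p, hps, hβp⟩ := (supPrime_iff_supIrred.2 hβ).le_finset_sup.1 hβx
    obtain ⟨hp, -, hpβ⟩ := (hs p).1 hps
    exact hmax p hp (hβp.lt_of_ne (Ne.symm hpβ))
  · exact sup_le (Finset.sup_le fun p hps => ((hs p).1 hps).2.1) hγ
  · refine le_of_forall_supIrred_le fun p hp hpγ => ?_
    by_cases hpβ : p = β
    · exact hpβ.le.trans le_sup_right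
    · exact le_sup_of_le_left (hx p hp hpγ hpβ)

end

/-- In a finite distributive lattice, let `β` be a maximal join-irreducible and `β₁` the
(unique) join-irreducible covered by `β` in `J(L)` (the join-irreducibles below `β` forming
a chain). Then `x ↦ x ⊔ β` is an order isomorphism from
`B_{β₁}(L_β) = {x : β ≰ x and β₁ ≤ x}` onto `B_β = {γ : β ≤ γ}`. -/
theorem stmt14 {L : Type*} [DistribLattice L] [Fintype L] (β β₁ : L)
    (hβ : SupIrred β ∧ ∀ γ : L, SupIrred γ → ¬ β < γ)
    (hβ₁ : SupIrred β₁ ∧ β₁ < β ∧ ∀ δ : L, SupIrred δ → ¬ (β₁ < δ ∧ δ < β))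
    (hchain : ∀ γ δ : L, SupIrred γ → SupIrred δ → γ < β → δ < β → γ ≤ δ ∨ δ ≤ γ) :
    ∃ e : {x : L // ¬ β ≤ x ∧ β₁ ≤ x} ≃o {γ : L // β ≤ γ},
      ∀ x, (e x : L) = (x : L) ⊔ β := by
  have : Nonempty L := ⟨β⟩
  let : OrderBot L := Fintype.toOrderBot L
  have hbelow : ∀ p, SupIrred p → p < β → p ≤ β₁ := fun p hp hpβ =>
    supIrred_le_of_lt_of_chain hβ₁ hchain hp hpβ
  let f : {x : L // ¬ β ≤ x ∧ β₁ ≤ x} ↪o {γ : L // β ≤ γ} :=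
    OrderEmbedding.ofMapLEIff (fun x => ⟨x ⊔ β, le_sup_right⟩) fun x y =>
      ⟨le_of_sup_le_sup_of_not_le x.2.1 fun p hp hpβ => (hbelow p hp hpβ).trans y.2.2,
        fun hxy => sup_le_sup_right hxy β⟩
  refine ⟨OrderIso.ofSurjective f fun ⟨γ, hγ⟩ => ?_, fun _ => rfl⟩
  obtain ⟨x, hβx, hx, rfl⟩ := exists_sup_eq_of_maximal_supIrred hβ.1 hβ.2 hγ
  exact ⟨⟨x, hβx, hx β₁ hβ₁.1 (hβ₁.2.1.le.trans hγ) hβ₁.2.1.ne⟩, rfl⟩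
end

section
/- Let L = c(m) × c(n) be the product of two finite chains with m, n ≥ 2, and α = (a, b) ∈ L. Then the number of γ ∈ L such that α and γ lie in a common diamond of L equals or exceeds (m−1)(n−1) = |L| − |J(L)|, where |L| = mn and |J(L)| = (m−1) + (n−1). -/
/-! Fix `α = (a, b)`. Every `γ = (c, d)` with `c ≠ a` and `d ≠ b` shares a diamond with `α`:
if `α` and `γ` are incomparable they span one themselves, and if, say, `α < γ`, then both
coordinates increase strictly, so `(a, d)` and `(c, b)` are incomparable with meet `α` and
join `γ`. There are `(m - 1)(n - 1)` such `γ`. -/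

section Diamond

variable {L : Type*} [Lattice L]

def SharesDiamond (u v : L) : Prop :=
  ∃ x y : L, ¬ x ≤ y ∧ ¬ y ≤ x ∧ u ∈ diamond x y ∧ v ∈ diamond x y

theorem SharesDiamond.symm {u v : L} (h : SharesDiamond u v) : SharesDiamond v u :=
  let ⟨x, y, hxy, hyx, hu, hv⟩ := h
  ⟨x, y, hxy, hyx, hv, hu⟩

theorem sharesDiamond_of_incomparable {u v : L} (huv : ¬ u ≤ v) (hvu : ¬ v ≤ u) :
    SharesDiamond u v :=
  ⟨u, v, huv, hvu, Or.inl rfl, Or.inr (Or.inl rfl)⟩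

end Diamond

section Product

variable {α β : Type*} [Lattice α] [Lattice β]

theorem Prod.sharesDiamond_of_lt_of_lt {u v : α × β} (h₁ : u.1 < v.1) (h₂ : u.2 < v.2) :
    SharesDiamond u v := by
  refine ⟨(u.1, v.2), (v.1, u.2), ?_, ?_, ?_, ?_⟩
  · simp [h₂.not_ge]
  · simp [h₁.not_ge]
  · have hinf : (u.1, v.2) ⊓ (v.1, u.2) = u := by
      ext <;> simp [h₁.le, h₂.le]
    simp [diamond, hinf]
  · have hsup : (u.1, v.2) ⊔ (v.1, u.2) = v := by
      ext <;> simp [h₁.le, h₂.le]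
    simp [diamond, hsup]

theorem Prod.sharesDiamond_of_ne_of_ne {u v : α × β} (h₁ : u.1 ≠ v.1) (h₂ : u.2 ≠ v.2) :
    SharesDiamond u v := by
  by_cases huv : u ≤ v
  · exact Prod.sharesDiamond_of_lt_of_lt (huv.1.lt_of_ne h₁) (huv.2.lt_of_ne h₂)
  by_cases hvu : v ≤ u
  · exact (Prod.sharesDiamond_of_lt_of_lt (hvu.1.lt_of_ne h₁.symm)
      (hvu.2.lt_of_ne h₂.symm)).symm
  exact sharesDiamond_of_incomparable huv hvu

end Product

theorem Prod.ncard_setOf_fst_ne_and_snd_ne {α β : Type*} [Finite α] [Finite β] (p : α × β) :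
    {q : α × β | q.1 ≠ p.1 ∧ q.2 ≠ p.2}.ncard = (Nat.card α - 1) * (Nat.card β - 1) := by
  have hprod : {q : α × β | q.1 ≠ p.1 ∧ q.2 ≠ p.2} = {p.1}ᶜ ×ˢ {p.2}ᶜ := rfl
  rw [hprod, Set.ncard_prod, Set.ncard_compl, Set.ncard_compl, Set.ncard_singleton,
    Set.ncard_singleton]

theorem stmt17_general (m n : ℕ) (α : Fin m × Fin n) :
    {γ : Fin m × Fin n | ∃ x y : Fin m × Fin n, ¬ x ≤ y ∧ ¬ y ≤ x ∧
        α ∈ ({x, y, x ⊔ y, x ⊓ y} : Set (Fin m × Fin n)) ∧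
        γ ∈ ({x, y, x ⊔ y, x ⊓ y} : Set (Fin m × Fin n))}.ncard ≥
      (m - 1) * (n - 1) := by
  have hcount := Prod.ncard_setOf_fst_ne_and_snd_ne α
  rw [Nat.card_fin, Nat.card_fin] at hcount
  rw [ge_iff_le, ← hcount]
  exact Set.ncard_le_ncard (fun γ ⟨h₁, h₂⟩ => Prod.sharesDiamond_of_ne_of_ne h₁.symm h₂.symm)

/-- In `L = c(m) × c(n)` with `m, n ≥ 2`, for any `α` the number of `γ` lying in a common
diamond with `α` is at least `(m−1)(n−1) = |L| − |J(L)|`. -/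
theorem stmt17 (m n : ℕ) (hm : 2 ≤ m) (hn : 2 ≤ n) (α : Fin m × Fin n) :
    {γ : Fin m × Fin n | ∃ x y : Fin m × Fin n, ¬ x ≤ y ∧ ¬ y ≤ x ∧
        α ∈ ({x, y, x ⊔ y, x ⊓ y} : Set (Fin m × Fin n)) ∧
        γ ∈ ({x, y, x ⊔ y, x ⊓ y} : Set (Fin m × Fin n))}.ncard ≥
      (m - 1) * (n - 1) :=
  stmt17_general m n α
end
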